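/- Let P, Q be probability measures with dQ/dP = r satisfying 0 < m ≤ r ≤ M. Define operators on L²₀(P) (mean-zero L²(P) functions) by A*v = (v − (∫ v·(1/r) dP)/(∫ (1/r) dP))·(1/r) and Bu = u·r − ∫ u·r dP. Then B∘A* and A*∘B are both the identity on L²₀(P), i.e. the gradient operator A* is a bounded isomorphism with inverse B. -/

import Mathlib

open MeasureTheory

/-
Both identities are pointwise algebra once two integrals are computed. Since `(v - c) / r * r = v - c`,
`B (A* f) = (f - c) - ∫ (f - c) dP = f` for the constant `c` of `A*` and mean-zero `f`. Since
`(f r - k) / r = f - k / r`, the constant of `A*` at `B f = f r - k` is `-k ∫ (1/r) / ∫ (1/r) = -k`,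
so `A* (B f) = (f r - k + k) / r = f`; this needs `∫ (1/r) dP ≠ 0`, which the lower bound `m ≤ r`
provides by making `1/r` integrable and positive.
-/

namespace MeasureTheory

variable {α : Type*} [MeasurableSpace α] {μ : Measure α}

theorem integral_pos_of_ae_pos [NeZero μ] {f : α → ℝ} (hf : ∀ᵐ x ∂μ, 0 < f x)
    (hfi : Integrable f μ) : 0 < ∫ x, f x ∂μ := by
  rw [integral_pos_iff_support_of_nonneg_ae (hf.mono fun _ hx => hx.le) hfi, pos_iff_ne_zero]
  intro hsupp
  obtain ⟨x, hpos, hx⟩ := (hf.and (measure_eq_zero_iff_ae_notMem.1 hsupp)).exists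
  exact hx hpos.ne'

theorem integrable_one_div_of_le [IsFiniteMeasure μ] {r : α → ℝ} (hr : AEMeasurable r μ)
    {m : ℝ} (hm : 0 < m) (hle : ∀ᵐ x ∂μ, m ≤ r x) : Integrable (fun x => 1 / r x) μ := by
  refine Integrable.mono' (integrable_const (1 / m))
    (hr.const_div 1).aestronglyMeasurable ?_
  filter_upwards [hle] with x hx
  rw [Real.norm_eq_abs, abs_of_pos (one_div_pos.2 (hm.trans_le hx))]
  exact one_div_le_one_div_of_le hm hx

theorem sub_integral_mul_one_div_mul_ae_eq [IsProbabilityMeasure μ] {r f : α → ℝ}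
    (hr : ∀ᵐ x ∂μ, r x ≠ 0) (hf : Integrable f μ) (hf0 : ∫ x, f x ∂μ = 0) (c : ℝ) :
    (fun x => (f x - c) * (1 / r x) * r x - ∫ y, (f y - c) * (1 / r y) * r y ∂μ) =ᵐ[μ] f := by
  have hcancel : (fun x => (f x - c) * (1 / r x) * r x) =ᵐ[μ] fun x => f x - c := by
    filter_upwards [hr] with x hx
    field_simp
  have hintegral : ∫ y, (f y - c) * (1 / r y) * r y ∂μ = -c := by
    rw [integral_congr_ae hcancel, integral_sub hf (integrable_const c), hf0, integral_const]
    simp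
  filter_upwards [hcancel] with x hx
  rw [hx, hintegral]
  ring

theorem sub_integral_mul_one_div_div_mul_one_div_ae_eq {r f : α → ℝ}
    (hr : ∀ᵐ x ∂μ, r x ≠ 0) (hr_inv : Integrable (fun x => 1 / r x) μ)
    (hJ : ∫ x, 1 / r x ∂μ ≠ 0) (hf : Integrable f μ) (hf0 : ∫ x, f x ∂μ = 0) (k : ℝ) :
    (fun x => ((f x * r x - k) - (∫ y, (f y * r y - k) * (1 / r y) ∂μ) / ∫ y, 1 / r y ∂μ)
      * (1 / r x)) =ᵐ[μ] f := by
  have hsplit : (fun x => (f x * r x - k) * (1 / r x)) =ᵐ[μ] fun x => f x - k * (1 / r x) := by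
    filter_upwards [hr] with x hx
    field_simp
  have hintegral : ∫ y, (f y * r y - k) * (1 / r y) ∂μ = -(k * ∫ y, 1 / r y ∂μ) := by
    rw [integral_congr_ae hsplit, integral_sub hf (hr_inv.const_mul k), hf0, integral_const_mul]
    ring
  filter_upwards [hr] with x hx
  rw [hintegral, neg_div, mul_div_cancel_right₀ k hJ]
  field_simp
  ring

end MeasureTheory

theorem stmt7_general {α : Type*} [MeasurableSpace α] (P : Measure α)
    [IsProbabilityMeasure P]
    (r : α → ℝ) (hr : Measurable r)
    (m M : ℝ) (hm : 0 < m) (hbound : ∀ᵐ x ∂P, m ≤ r x ∧ r x ≤ M)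
    (Astar B : (α → ℝ) → (α → ℝ))
    (hA : ∀ v, Astar v = fun x =>
      (v x - (∫ y, v y * (1 / r y) ∂P) / (∫ y, (1 / r y) ∂P)) * (1 / r x))
    (hB : ∀ u, B u = fun x => u x * r x - ∫ y, u y * r y ∂P) :
    ∀ f : α → ℝ, MemLp f 2 P → (∫ x, f x ∂P = 0) →
      (B (Astar f) =ᵐ[P] f) ∧ (Astar (B f) =ᵐ[P] f) := by
  intro f hf hf0
  have hf_int : Integrable f P := hf.integrable one_le_two
  have hlower : ∀ᵐ x ∂P, m ≤ r x := hbound.mono fun _ hx => hx.1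
  have hpos : ∀ᵐ x ∂P, 0 < r x := hlower.mono fun _ hx => hm.trans_le hx
  have hne : ∀ᵐ x ∂P, r x ≠ 0 := hpos.mono fun _ hx => hx.ne'
  have hinv : Integrable (fun x => 1 / r x) P := integrable_one_div_of_le hr.aemeasurable hm hlower
  have hJ : ∫ x, 1 / r x ∂P ≠ 0 :=
    (integral_pos_of_ae_pos (hpos.mono fun _ hx => one_div_pos.2 hx) hinv).ne'
  constructor
  · rw [hB, hA]
    exact sub_integral_mul_one_div_mul_ae_eq hne hf_int hf0 _
  · rw [hA, hB]
    exact sub_integral_mul_one_div_div_mul_one_div_ae_eq hne hinv hJ hf_int hf0 _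

/-- The gradient operator `A*` (converting influence functions into policy gradients
for the policy metric `∫ u v dQ`) is inverted on mean-zero `L²(P)` functions by
`B u = u * r - ∫ u * r dP`: both compositions are the identity (P-a.e.). -/
theorem stmt7 {α : Type*} [MeasurableSpace α] (P Q : Measure α)
    [IsProbabilityMeasure P] [IsProbabilityMeasure Q]
    (r : α → ℝ) (hr : Measurable r)
    (hQ : Q = P.withDensity (fun x => ENNReal.ofReal (r x)))
    (m M : ℝ) (hm : 0 < m) (hbound : ∀ᵐ x ∂P, m ≤ r x ∧ r x ≤ M)
    (Astar B : (α → ℝ) → (α → ℝ))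
    (hA : ∀ v, Astar v = fun x =>
      (v x - (∫ y, v y * (1 / r y) ∂P) / (∫ y, (1 / r y) ∂P)) * (1 / r x))
    (hB : ∀ u, B u = fun x => u x * r x - ∫ y, u y * r y ∂P) :
    ∀ f : α → ℝ, MemLp f 2 P → (∫ x, f x ∂P = 0) →
      (B (Astar f) =ᵐ[P] f) ∧ (Astar (B f) =ᵐ[P] f) :=
  stmt7_general P r hr m M hm hbound Astar B hA hB
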